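/- arXiv:1001.4790 — 2 statements merged into one kernel-verified Lean document; each statement's English description precedes it below -/
import Mathlib

section
/- Let h(w) ∈ ℚ[w, w⁻¹] be a Laurent polynomial such that h(k) ∈ ℤ[1/k] for every nonzero integer k. Then there exists m ≥ 0 such that wᵐ·h(w) is a ℤ-linear combination of the binomial polynomials P_i(t) = t(t-1)⋯(t-(i-1))/i!, i ≥ 0. -/
open Polynomial

/-- The binomial polynomial `P_i(t) = t(t-1)⋯(t-(i-1))/i!` in `ℚ[t]` (`P_0 = 1`). -/
noncomputable def binomialPoly (i : ℕ) : Polynomial ℚ :=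
  Polynomial.C ((i.factorial : ℚ)⁻¹) * ∏ j ∈ Finset.range i, (Polynomial.X - Polynomial.C (j : ℚ))

/-- Evaluation of a Laurent polynomial over `ℚ` at a rational number. -/
noncomputable def laurentEval (f : LaurentPolynomial ℚ) (q : ℚ) : ℚ :=
  Finsupp.sum (AddMonoidAlgebra.coeff f) fun n c => c * q ^ n

/-!
Some `wⁿ·h` is a polynomial `p ∈ ℚ[X]`, and `p(k) ∈ ℤ[1/k]` for `k ≠ 0`. If `b ≠ 0` clears the
denominators of `p`, the denominator of `p(k)` divides both `b` and a power of `k`, hence divides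
`k^|b|`: a prime power dividing `b` has exponent below `|b|`. So `q = X^|b|·p` is integer-valued
(also at `0`). By Newton's forward-difference formula `q = ∑ₖ Δᵏq(0)·P_k`, and each `Δᵏq(0)` is
an alternating sum of values of `q`, hence an integer.
-/

open Finset fwdDiff

theorem laurentEval_eq_smeval (f : LaurentPolynomial ℚ) (u : ℚˣ) :
    laurentEval f u = LaurentPolynomial.smeval f u := by
  simp [laurentEval, LaurentPolynomial.smeval, Units.val_zpow_eq_zpow_val]

theorem laurentEval_eq_eval₂ (f : LaurentPolynomial ℚ) (u : ℚˣ) :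
    laurentEval f u = LaurentPolynomial.eval₂ (RingHom.id ℚ) u f := by
  rw [laurentEval_eq_smeval]
  induction f using LaurentPolynomial.induction_on' with
  | add f g hf hg => rw [LaurentPolynomial.smeval_add, map_add, hf, hg]
  | C_mul_T n a => simp [Units.val_zpow_eq_zpow_val]

theorem eval_eq_laurentEval_mul_pow {h : LaurentPolynomial ℚ} {p : ℚ[X]} {n : ℕ}
    (hp : toLaurent p = h * LaurentPolynomial.T n) {q : ℚ} (hq : q ≠ 0) :
    p.eval q = laurentEval h q * q ^ n := by
  have := congrArg (LaurentPolynomial.eval₂ (RingHom.id ℚ) (Units.mk0 q hq)) hp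
  rw [LaurentPolynomial.eval₂_toLaurent, map_mul, LaurentPolynomial.eval₂_T,
    ← laurentEval_eq_eval₂] at this
  simpa using this

theorem Nat.dvd_pow_self_of_dvd_pow {d k m : ℕ} (hk : k ≠ 0) (h : d ∣ k ^ m) : d ∣ k ^ d := by
  have hd : d ≠ 0 := by
    rintro rfl
    exact pow_ne_zero m hk (zero_dvd_iff.mp h)
  exact (Nat.dvd_pow_self_iff hd hk).mpr ((Nat.exists_dvd_pow_iff hd hk).mp ⟨m, h⟩)

theorem Rat.exists_pow_mul_eq_intCast {r : ℚ} {a b z k : ℤ} {m : ℕ} (hb : b ≠ 0) (hk : k ≠ 0)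
    (hrb : r = a / b) (hrk : r = z / k ^ m) : ∃ w : ℤ, (k : ℚ) ^ b.natAbs * r = w := by
  have hden_b : (r.den : ℤ) ∣ b := by
    rw [hrb, ← Rat.divInt_eq_div]
    exact Rat.den_dvd a b
  have hden_k : (r.den : ℤ) ∣ k ^ m := by
    rw [hrk, ← Int.cast_pow, ← Rat.divInt_eq_div]
    exact Rat.den_dvd _ _
  have hden : (r.den : ℤ) ∣ k ^ b.natAbs := by
    rw [Int.natCast_dvd, Int.natAbs_pow] at hden_k ⊢
    rw [Int.natCast_dvd] at hden_b
    exact (Nat.dvd_pow_self_of_dvd_pow (Int.natAbs_ne_zero.mpr hk) hden_k).trans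
      (pow_dvd_pow _ (Nat.le_of_dvd (Int.natAbs_pos.mpr hb) hden_b))
  obtain ⟨t, ht⟩ := hden
  refine ⟨t * r.num, ?_⟩
  rw [← Int.cast_pow, ht, Int.cast_mul, Int.cast_mul, ← Rat.mul_den_eq_num]
  push_cast
  ring

namespace Polynomial

theorem exists_eval_intCast_eq_div (p : ℚ[X]) :
    ∃ b : ℤ, b ≠ 0 ∧ ∀ k : ℤ, ∃ a : ℤ, p.eval (k : ℚ) = a / b := by
  obtain ⟨b, hbM, hb⟩ := IsLocalization.integerNormalization_spec (nonZeroDivisors ℤ) p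
  have hb0 : b ≠ 0 := nonZeroDivisors.ne_zero hbM
  refine ⟨b, hb0, fun k =>
    ⟨(IsLocalization.integerNormalization (nonZeroDivisors ℤ) p).eval k, ?_⟩⟩
  have := congrArg (eval (k : ℚ)) hb
  rw [eval_intCast_map] at this
  rw [eq_div_iff (Int.cast_ne_zero.mpr hb0)]
  simpa [mul_comm] using this.symm

theorem exists_X_pow_mul_eval_intCast_eq {p : ℚ[X]}
    (hp : ∀ k : ℤ, k ≠ 0 → ∃ (z : ℤ) (m : ℕ), p.eval (k : ℚ) = z / (k : ℚ) ^ m) :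
    ∃ N : ℕ, ∀ k : ℤ, ∃ w : ℤ, (X ^ N * p).eval (k : ℚ) = (w : ℚ) := by
  obtain ⟨b, hb, hpb⟩ := p.exists_eval_intCast_eq_div
  refine ⟨b.natAbs, fun k => ?_⟩
  rcases eq_or_ne k 0 with rfl | hk
  · exact ⟨0, by simp [hb]⟩
  obtain ⟨a, ha⟩ := hpb k
  obtain ⟨z, m, hz⟩ := hp k hk
  simpa using Rat.exists_pow_mul_eq_intCast hb hk ha hz

end Polynomial

theorem binomialPoly_eval_natCast (i n : ℕ) : (binomialPoly i).eval (n : ℚ) = n.choose i := by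
  rw [binomialPoly, eval_mul, eval_C, eval_prod]
  simp only [eval_sub, eval_X, eval_C]
  rw [← descPochhammer_eval_eq_prod_range, descPochhammer_eval_eq_descFactorial,
    Nat.descFactorial_eq_factorial_mul_choose, Nat.cast_mul, inv_mul_cancel_left₀]
  exact_mod_cast i.factorial_ne_zero

theorem exists_fwdDiff_iter_eq_intCast {R : Type*} [Ring R] {f : R → R}
    (hf : ∀ n : ℕ, ∃ z : ℤ, f n = z) (k : ℕ) : ∃ z : ℤ, Δ_[1] ^[k] f 0 = z := by
  choose g hg using hf
  refine ⟨∑ j ∈ range (k + 1), (-1) ^ (k - j) * k.choose j * g j, ?_⟩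
  simp [fwdDiff_iter_eq_sum_shift, hg]

namespace Polynomial

theorem eq_sum_fwdDiff_iter_smul_binomialPoly (q : ℚ[X]) :
    q = ∑ k ∈ range (q.natDegree + 1), Δ_[1] ^[k] q.eval 0 • binomialPoly k := by
  apply eq_of_infinite_eval_eq
  refine Set.infinite_of_injective_forall_mem Nat.cast_injective fun n => ?_
  have newton := shift_eq_sum_fwdDiff_iter 1 q.eval n 0
  rw [zero_add, nsmul_one] at newton
  simp only [Set.mem_ofPred_eq, eval_finsetSum, eval_smul, binomialPoly_eval_natCast, smul_eq_mul,
    newton, nsmul_eq_mul]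
  rw [sum_subset (range_subset_range.mpr (by omega : n + 1 ≤ n + q.natDegree + 1)),
    sum_subset (range_subset_range.mpr (by omega : q.natDegree + 1 ≤ n + q.natDegree + 1))]
  · exact sum_congr rfl fun k _ => mul_comm _ _
  · intro k _ hk
    rw [fwdDiff_iter_eq_zero_of_degree_lt (by simpa using hk), Pi.zero_apply, zero_mul]
  · intro k _ hk
    rw [Nat.choose_eq_zero_of_lt (by simpa using hk), Nat.cast_zero, zero_mul]

theorem exists_finsupp_sum_binomialPoly_eq {q : ℚ[X]}
    (hq : ∀ n : ℕ, ∃ z : ℤ, q.eval (n : ℚ) = z) :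
    ∃ c : ℕ →₀ ℤ, (c.sum fun i z => z • binomialPoly i) = q := by
  refine Finsupp.mem_span_range_iff_exists_finsupp.mp ?_
  rw [q.eq_sum_fwdDiff_iter_smul_binomialPoly]
  refine Submodule.sum_mem _ fun k _ => ?_
  obtain ⟨z, hz⟩ := exists_fwdDiff_iter_eq_intCast (f := q.eval) hq k
  rw [hz, Int.cast_smul_eq_zsmul]
  exact Submodule.smul_mem _ z (Submodule.subset_span ⟨k, rfl⟩)

end Polynomial

/-- If a Laurent polynomial `h ∈ ℚ[w,w⁻¹]` satisfies `h(k) ∈ ℤ[1/k]` for every nonzero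
integer `k`, then some `wᵐ·h(w)` is a `ℤ`-linear combination of the binomial polynomials. -/
theorem laurent_int_loc_valued_is_comb_of_binomials (h : LaurentPolynomial ℚ)
    (hk : ∀ k : ℤ, k ≠ 0 → ∃ (z : ℤ) (m : ℕ), laurentEval h (k : ℚ) = (z : ℚ) / (k : ℚ) ^ m) :
    ∃ (m : ℕ) (c : ℕ →₀ ℤ),
      LaurentPolynomial.T (m : ℤ) * h =
        Polynomial.toLaurent (c.sum fun i z => z • binomialPoly i) := by
  obtain ⟨n, p, hp⟩ := LaurentPolynomial.exists_T_pow h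
  have hpk : ∀ k : ℤ, k ≠ 0 → ∃ (z : ℤ) (m : ℕ), p.eval (k : ℚ) = z / (k : ℚ) ^ m := by
    intro k hk0
    obtain ⟨z, m, hz⟩ := hk k hk0
    refine ⟨z * k ^ n, m, ?_⟩
    rw [eval_eq_laurentEval_mul_pow hp (Int.cast_ne_zero.mpr hk0), hz]
    push_cast
    ring
  obtain ⟨N, hN⟩ := exists_X_pow_mul_eval_intCast_eq hpk
  obtain ⟨c, hc⟩ := exists_finsupp_sum_binomialPoly_eq fun n : ℕ => by exact_mod_cast hN n
  refine ⟨N + n, c, ?_⟩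
  rw [hc, map_mul, toLaurent_X_pow, hp, Nat.cast_add, LaurentPolynomial.T_add]
  ring
end

section
/- Let R be the subring of ℚ[u,v,u⁻¹,v⁻¹] consisting of those Laurent polynomials f(u,v) with f(t,kt) ∈ ℤ[t,t⁻¹,1/k] for all nonzero integers k. Then each p_i(u,v) = (1/i!)·v(v-u)⋯(v-(i-1)u) belongs to R. -/
/-- The ring of two-variable Laurent polynomials `ℚ[u,v,u⁻¹,v⁻¹]`,
modeled as the monoid algebra of `ℤ × ℤ` over `ℚ` (exponents of `u` and `v`). -/
abbrev LaurentTwo : Type := AddMonoidAlgebra ℚ (ℤ × ℤ)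

/-- The variable `u`. -/
noncomputable def uVar : LaurentTwo := AddMonoidAlgebra.single ((1 : ℤ), (0 : ℤ)) 1

/-- The variable `v`. -/
noncomputable def vVar : LaurentTwo := AddMonoidAlgebra.single ((0 : ℤ), (1 : ℤ)) 1

/-- `p_i(u,v) = (1/i!)·v(v-u)(v-2u)⋯(v-(i-1)u)`; note `p_0 = 1`. -/
noncomputable def pPoly (i : ℕ) : LaurentTwo :=
  (i.factorial : ℚ)⁻¹ • ∏ j ∈ Finset.range i, (vVar - (j : ℚ) • uVar)

/-- The coefficient of `tⁿ` in `f(t, kt)`, for `f ∈ ℚ[u,v,u⁻¹,v⁻¹]`. -/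
noncomputable def substCoeff (f : LaurentTwo) (k : ℤ) (n : ℤ) : ℚ :=
  Finsupp.sum f.coeff fun ab c => if ab.1 + ab.2 = n then c * (k : ℚ) ^ ab.2 else 0

/-- `f(t,kt) ∈ ℤ[t,t⁻¹,1/k]` for all nonzero integers `k`: every coefficient of the
Laurent polynomial `f(t,kt)` lies in `ℤ[1/k]`. -/
def MemW (f : LaurentTwo) : Prop :=
  ∀ k : ℤ, k ≠ 0 → ∀ n : ℤ, ∃ (z : ℤ) (m : ℕ), substCoeff f k n = (z : ℚ) / (k : ℚ) ^ m

/-!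
Under `u ↦ t`, `v ↦ k t` each factor `v - j u` of `p_i` becomes `(k - j) t`, so `p_i(t, kt)` is
the monomial `(k(k-1)⋯(k-i+1) / i!) tⁱ = C(k, i) tⁱ`, and the generalized binomial coefficient
`C(k, i)` is an integer whenever `k` is.
-/

open Polynomial

noncomputable def substMonHom (k : ℚˣ) : Multiplicative (ℤ × ℤ) →* AddMonoidAlgebra ℚ ℤ where
  toFun x := AddMonoidAlgebra.single (x.toAdd.1 + x.toAdd.2) ((k ^ x.toAdd.2 : ℚˣ) : ℚ)
  map_one' := by
    simp only [toAdd_one, Prod.fst_zero, Prod.snd_zero, add_zero, zpow_zero, Units.val_one]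
    rfl
  map_mul' x y := by
    simp only [toAdd_mul, Prod.fst_add, Prod.snd_add, zpow_add, Units.val_mul,
      AddMonoidAlgebra.single_mul_single]
    congr 1
    ring

/-- The specialization `f(u, v) ↦ f(t, kt)`, with `ℚ[t,t⁻¹]` as `AddMonoidAlgebra ℚ ℤ`. -/
noncomputable def substHom (k : ℚˣ) : LaurentTwo →ₐ[ℚ] AddMonoidAlgebra ℚ ℤ :=
  AddMonoidAlgebra.lift ℚ (AddMonoidAlgebra ℚ ℤ) (ℤ × ℤ) (substMonHom k)

theorem substHom_single (k : ℚˣ) (ab : ℤ × ℤ) (c : ℚ) :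
    substHom k (AddMonoidAlgebra.single ab c) =
      AddMonoidAlgebra.single (ab.1 + ab.2) (c * (k ^ ab.2 : ℚˣ)) := by
  rw [substHom, AddMonoidAlgebra.lift_single]
  exact AddMonoidAlgebra.smul_single c _ _

theorem substHom_uVar (k : ℚˣ) : substHom k uVar = AddMonoidAlgebra.single 1 1 := by
  simp [uVar, substHom_single]

theorem substHom_vVar (k : ℚˣ) : substHom k vVar = AddMonoidAlgebra.single 1 (k : ℚ) := by
  simp [vVar, substHom_single]

theorem substCoeff_eq_coeff_substHom (f : LaurentTwo) {k : ℤ} (hk : k ≠ 0) (n : ℤ) :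
    substCoeff f k n = (substHom (Units.mk0 (k : ℚ) (Int.cast_ne_zero.mpr hk)) f).coeff n := by
  conv_rhs => rw [← f.sum_coeff_single]
  rw [substCoeff, Finsupp.sum, Finsupp.sum, map_sum, AddMonoidAlgebra.coeff_sum,
    Finsupp.finsetSum_apply]
  refine Finset.sum_congr rfl fun ab _ => ?_
  rw [substHom_single, AddMonoidAlgebra.coeff_single, Finsupp.single_apply]
  simp [eq_comm]

theorem Ring.choose_eq_inv_factorial_mul_prod_range {K : Type*} [Field K] [CharZero K]
    (r : K) (n : ℕ) :
    Ring.choose r n = (n.factorial : K)⁻¹ * ∏ j ∈ Finset.range n, (r - j) := by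
  rw [Ring.choose_eq_smul, smul_eq_mul, ← descPochhammer_eval_eq_prod_range,
    ← descPochhammer_map (algebraMap ℤ K), eval_map, ← aeval_def, aeval_eq_smeval]

theorem substHom_pPoly (k : ℚˣ) (i : ℕ) :
    substHom k (pPoly i) = AddMonoidAlgebra.single (i : ℤ) (Ring.choose (k : ℚ) i) := by
  have factor (j : ℕ) :
      substHom k (vVar - (j : ℚ) • uVar) = AddMonoidAlgebra.single 1 ((k : ℚ) - j) := by
    rw [map_sub, map_smul, substHom_uVar, substHom_vVar, AddMonoidAlgebra.smul_single,
      smul_eq_mul, mul_one, AddMonoidAlgebra.single_sub]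
  simp only [pPoly, map_smul, map_prod, factor, AddMonoidAlgebra.prod_single,
    AddMonoidAlgebra.smul_single, Finset.sum_const, Finset.card_range, nsmul_one, smul_eq_mul,
    Ring.choose_eq_inv_factorial_mul_prod_range]

theorem pPoly_memW_general (i : ℕ) : MemW (pPoly i) := by
  intro k hk n
  have choose_intCast : Ring.choose (k : ℚ) i = (Ring.choose k i : ℤ) :=
    (Ring.map_choose (Int.castRingHom ℚ) k i).symm
  rw [substCoeff_eq_coeff_substHom _ hk, substHom_pPoly, Units.val_mk0, choose_intCast,
    AddMonoidAlgebra.coeff_single, Finsupp.single_apply]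
  split_ifs
  · exact ⟨Ring.choose k i, 0, by simp⟩
  · exact ⟨0, 0, by simp⟩

/-- Each `p_i(u,v) = (1/i!)·v(v-u)⋯(v-(i-1)u)` belongs to the subring `R` of
`ℚ[u,v,u⁻¹,v⁻¹]` of Laurent polynomials `f` with `f(t,kt) ∈ ℤ[t,t⁻¹,1/k]` for all
nonzero integers `k`. -/
theorem pPoly_memW (i : ℕ) (hi : 1 ≤ i) : MemW (pPoly i) :=
  pPoly_memW_general i
end
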